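/- arXiv:2302.11055 — 4 statements merged into one kernel-verified Lean document; each statement's English description precedes it below -/
import Mathlib

section
/- Let k ≥ 2 be an integer and a₀, a₁, b₀, b₁ > 0 with a₀ ≤ b₀ and a₁ ≤ b₁. Suppose a sequence (u_t) of positive reals satisfies a₀ + a₁·∑_{s=0}^{t-1} u_s^{k-1} ≤ u_t ≤ b₀ + b₁·∑_{s=0}^{t-1} u_s^{k-1} for all t ∈ ℕ. If k = 2, then a₀(1+a₁)^t ≤ u_t ≤ b₀(1+b₁)^t for all t ∈ ℕ. -/
open Finset

lemma geom_aux (c : ℝ) (hc : 0 < c) (t : ℕ) :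
    c * ∑ s ∈ range t, (1 + c) ^ s = (1 + c) ^ t - 1 := by
  have := geom_sum_mul (1 + c) t
  linarith [this]

/-- two-sided geometric bounds for sequences in the case `k = 2`. -/
theorem stmt_0 (k : ℕ) (hk : 2 ≤ k) (hk2 : k = 2)
    (a0 a1 b0 b1 : ℝ) (ha0 : 0 < a0) (ha1 : 0 < a1) (hb0 : 0 < b0) (hb1 : 0 < b1)
    (hab0 : a0 ≤ b0) (hab1 : a1 ≤ b1)
    (u : ℕ → ℝ) (hu : ∀ t, 0 < u t)
    (hlb : ∀ t, a0 + a1 * ∑ s ∈ range t, u s ^ (k - 1) ≤ u t)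
    (hub : ∀ t, u t ≤ b0 + b1 * ∑ s ∈ range t, u s ^ (k - 1)) :
    ∀ t : ℕ, a0 * (1 + a1) ^ t ≤ u t ∧ u t ≤ b0 * (1 + b1) ^ t := by
  subst hk2
  norm_num at hlb hub
  intro t
  induction t using Nat.strong_induction_on with
  | _ t ih =>
    constructor
    · have hsum : ∑ s ∈ range t, a0 * (1 + a1) ^ s ≤ ∑ s ∈ range t, u s :=
        Finset.sum_le_sum fun s hs => (ih s (mem_range.mp hs)).1
      have h1 : a0 + a1 * ∑ s ∈ range t, a0 * (1 + a1) ^ s = a0 * (1 + a1) ^ t := by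
        have := geom_aux a1 ha1 t
        rw [← Finset.mul_sum]
        ring_nf
        ring_nf at this
        nlinarith [this]
      calc a0 * (1 + a1) ^ t = a0 + a1 * ∑ s ∈ range t, a0 * (1 + a1) ^ s := h1.symm
        _ ≤ a0 + a1 * ∑ s ∈ range t, u s := by
            have := Finset.sum_le_sum fun s hs => (ih s (mem_range.mp hs)).1
            nlinarith
        _ ≤ u t := hlb t
    · have hsum : ∑ s ∈ range t, u s ≤ ∑ s ∈ range t, b0 * (1 + b1) ^ s :=
        Finset.sum_le_sum fun s hs => (ih s (mem_range.mp hs)).2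
      have h1 : b0 + b1 * ∑ s ∈ range t, b0 * (1 + b1) ^ s = b0 * (1 + b1) ^ t := by
        have := geom_aux b1 hb1 t
        rw [← Finset.mul_sum]
        nlinarith [this]
      calc u t ≤ b0 + b1 * ∑ s ∈ range t, u s := hub t
        _ ≤ b0 + b1 * ∑ s ∈ range t, b0 * (1 + b1) ^ s := by nlinarith
        _ = b0 * (1 + b1) ^ t := h1
end

section
/- Let k > 2 be an integer and b₀, b₁ > 0. Suppose a sequence (v_t) of positive reals satisfies v_{t+1} = v_t + b₁·v_t^{k-1} with v_0 = b₀. Then for all t ∈ ℕ with b₀^{-(k-2)} - (k-2)·b₁·t > 0, we have v_t ≤ (b₀^{-(k-2)} - (k-2)·b₁·t)^{-1/(k-2)}. -/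
lemma key_step (m : ℕ) (hm : 1 ≤ m) (a b1 : ℝ) (ha : 0 < a) (hb1 : 0 < b1) :
    (a ^ m)⁻¹ - m * b1 ≤ ((a + b1 * a ^ (m + 1)) ^ m)⁻¹ := by
  set c := a + b1 * a ^ (m + 1) with hc
  have hac : a ≤ c := by nlinarith [pow_pos ha (m + 1)]
  have hcpos : 0 < c := lt_of_lt_of_le ha hac
  have hsum : (∑ i ∈ Finset.range m, c ^ i * a ^ (m - 1 - i)) ≤ m * c ^ (m - 1) := by
    calc (∑ i ∈ Finset.range m, c ^ i * a ^ (m - 1 - i))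
        ≤ ∑ i ∈ Finset.range m, c ^ (m - 1) := by
          apply Finset.sum_le_sum
          intro i hi
          have hi' : i + (m - 1 - i) = m - 1 := by
            have := Finset.mem_range.mp hi; omega
          calc c ^ i * a ^ (m - 1 - i) ≤ c ^ i * c ^ (m - 1 - i) := by
                exact mul_le_mul_of_nonneg_left (pow_le_pow_left₀ ha.le hac _)
                  (pow_nonneg hcpos.le i)
            _ = c ^ (m - 1) := by rw [← pow_add, hi']
      _ = m * c ^ (m - 1) := by simp [Finset.sum_const, mul_comm]
  have hdiff : c ^ m - a ^ m ≤ m * c ^ (m - 1) * (c - a) := by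
    have h := geom_sum₂_mul c a m
    nlinarith [sub_nonneg.mpr hac]
  have hA : 0 < a ^ m := pow_pos ha m
  have hC : 0 < c ^ m := pow_pos hcpos m
  have hcm : c ^ (m - 1) * c = c ^ m := by
    rw [← pow_succ]; congr 1; omega
  have hkey : c ^ m - a ^ m ≤ (m : ℝ) * b1 * a ^ m * c ^ m := by
    -- multiply hdiff relation by a / a  : a*(c^m - a^m) ≤ m*c^(m-1)*(c-a)*a ≤ m*c^m*(c-a)
    have h1 : a * (c ^ m - a ^ m) ≤ m * c ^ (m - 1) * (c - a) * a := by
      nlinarith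
    have h2 : m * c ^ (m - 1) * (c - a) * a ≤ m * c ^ m * (c - a) := by
      have hca : 0 ≤ c - a := sub_nonneg.mpr hac
      have hcm1 : 0 ≤ c ^ (m - 1) := pow_nonneg hcpos.le _
      have hle : c ^ (m - 1) * a ≤ c ^ m := by rw [← hcm]; nlinarith
      have hmn : (0:ℝ) ≤ (m:ℝ) * (c - a) := mul_nonneg (Nat.cast_nonneg m) hca
      nlinarith [mul_le_mul_of_nonneg_left hle hmn]
    have hceq : c - a = b1 * a ^ (m + 1) := by rw [hc]; ring
    have ham1 : a ^ (m + 1) = a * a ^ m := by rw [pow_succ]; ring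
    have h3 : a * (c ^ m - a ^ m) ≤ m * c ^ m * (b1 * (a * a ^ m)) := by
      rw [← ham1, ← hceq]; linarith
    nlinarith
  have : (a ^ m)⁻¹ - (c ^ m)⁻¹ ≤ m * b1 := by
    rw [inv_sub_inv hA.ne' hC.ne', div_le_iff₀ (by positivity)]
    nlinarith
  linarith

/-- discrete Bihari–LaSalle upper bound for `k > 2`. -/
theorem stmt_1 (k : ℕ) (hk : 2 < k) (b0 b1 : ℝ) (hb0 : 0 < b0) (hb1 : 0 < b1)
    (v : ℕ → ℝ) (hv : ∀ t, 0 < v t) (hv0 : v 0 = b0)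
    (hrec : ∀ t, v (t + 1) = v t + b1 * v t ^ (k - 1)) :
    ∀ t : ℕ, 0 < b0 ^ (-((k : ℝ) - 2)) - ((k : ℝ) - 2) * b1 * t →
      v t ≤ (b0 ^ (-((k : ℝ) - 2)) - ((k : ℝ) - 2) * b1 * t) ^ (-(1 / ((k : ℝ) - 2))) := by
  set m := k - 2 with hmdef
  have hm1 : 1 ≤ m := by omega
  have hmcast : ((k : ℝ) - 2) = (m : ℝ) := by
    have : (k : ℝ) = ((m + 2 : ℕ) : ℝ) := by congr 1; omega
    rw [this]; push_cast; ring
  have hmpos : (0 : ℝ) < (m : ℝ) := by exact_mod_cast Nat.pos_of_ne_zero (by omega)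
  have hrpow : ∀ x : ℝ, 0 < x → x ^ (-((k : ℝ) - 2)) = (x ^ m)⁻¹ := by
    intro x hx
    rw [hmcast, Real.rpow_neg hx.le, Real.rpow_natCast]
  -- main invariant
  have main : ∀ t : ℕ, b0 ^ (-((k : ℝ) - 2)) - ((k : ℝ) - 2) * b1 * t ≤ (v t ^ m)⁻¹ := by
    intro t
    induction t with
    | zero => rw [hv0, ← hrpow b0 hb0]; simp
    | succ n ih =>
      have hkm : k - 1 = m + 1 := by omega
      have hrec' : v (n + 1) = v n + b1 * v n ^ (m + 1) := by rw [hrec n, hkm]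
      have hstep := key_step m hm1 (v n) b1 (hv n) hb1
      rw [← hrec'] at hstep
      have : ((n : ℝ) + 1) = ((n + 1 : ℕ) : ℝ) := by push_cast; ring
      push_cast
      rw [hmcast] at ih ⊢
      nlinarith
  intro t hpos
  have hle := main t
  set X := b0 ^ (-((k : ℝ) - 2)) - ((k : ℝ) - 2) * b1 * t with hX
  have hvt : 0 < v t := hv t
  have hvtpow : X ≤ (v t) ^ (-((k : ℝ) - 2)) := by rw [hrpow (v t) hvt]; exact hle
  have hzneg : -(1 / ((k : ℝ) - 2)) ≤ 0 := by
    rw [hmcast, neg_nonpos]; positivity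
  have hanti := Real.rpow_le_rpow_of_nonpos hpos hvtpow hzneg
  have heq : ((v t) ^ (-((k : ℝ) - 2))) ^ (-(1 / ((k : ℝ) - 2))) = v t := by
    rw [← Real.rpow_mul hvt.le]
    rw [show -((k:ℝ) - 2) * -(1 / ((k:ℝ) - 2)) = 1 by rw [hmcast]; field_simp]
    exact Real.rpow_one _
  rw [heq] at hanti
  exact hanti
end

section
/- Let k > 2 be an integer, a₀, a₁ > 0, and Δ > 0. Suppose a sequence (w_t) of positive reals satisfies w_{t+1} = w_t + a₁·w_t^{k-1} with w_0 = a₀. Then for any t ∈ ℕ such that w_s ≤ Δ for all s ≤ t, we have w_t ≥ (a₀^{-(k-2)} - ((k-2)/(1+a₁Δ^{k-2})^{k-1})·a₁·t)^{-1/(k-2)}. -/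
/-- discrete Bihari–LaSalle lower bound for `k > 2`. -/
theorem stmt_2 (k : ℕ) (hk : 2 < k) (a0 a1 Δ : ℝ) (ha0 : 0 < a0) (ha1 : 0 < a1) (hΔ : 0 < Δ)
    (w : ℕ → ℝ) (hw : ∀ t, 0 < w t) (hw0 : w 0 = a0)
    (hrec : ∀ t, w (t + 1) = w t + a1 * w t ^ (k - 1)) :
    ∀ t : ℕ, (∀ s ≤ t, w s ≤ Δ) →
      (a0 ^ (-((k : ℝ) - 2))
          - (((k : ℝ) - 2) / (1 + a1 * Δ ^ (k - 2)) ^ (k - 1)) * a1 * t)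
            ^ (-(1 / ((k : ℝ) - 2)))
        ≤ w t := by
  intro t hts
  set m := k - 2 with hm
  have hm1 : 1 ≤ m := by omega
  have hkm : (k : ℝ) - 2 = (m : ℝ) := by
    rw [hm, Nat.cast_sub (by omega)]; norm_num
  set D : ℝ := 1 + a1 * Δ ^ m with hD
  have hD1 : (1 : ℝ) ≤ D := by
    have : 0 < a1 * Δ ^ m := by positivity
    simp [hD]; linarith
  have hDpos : (0 : ℝ) < D ^ (k - 1) := by positivity
  set c : ℝ := (m : ℝ) * a1 / D ^ (k - 1) with hc
  -- key one-step inequality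
  have key : ∀ x : ℝ, 0 < x → x ≤ Δ →
      c ≤ (x ^ m)⁻¹ - ((x + a1 * x ^ (k - 1)) ^ m)⁻¹ := by
    intro x hx hxΔ
    set u : ℝ := a1 * x ^ m with hu
    have hu0 : 0 < u := by positivity
    have huΔ : u ≤ a1 * Δ ^ m := by
      have := pow_le_pow_left₀ hx.le hxΔ m
      exact mul_le_mul_of_nonneg_left this ha1.le
    have hy : x + a1 * x ^ (k - 1) = x * (1 + u) := by
      have hk1 : k - 1 = m + 1 := by omega
      rw [hk1, hu, pow_succ]; ring
    rw [hy, mul_pow]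
    have hxm : (0 : ℝ) < x ^ m := by positivity
    have hPm : (0 : ℝ) < (1 + u) ^ m := by positivity
    have h1 : 1 + (m : ℝ) * u ≤ (1 + u) ^ m := one_add_mul_le_pow (by linarith) m
    have e1 : (x ^ m)⁻¹ - (x ^ m * (1 + u) ^ m)⁻¹
        = ((1 + u) ^ m - 1) / (x ^ m * (1 + u) ^ m) := by
      field_simp
    have e2 : (m : ℝ) * u / (x ^ m * (1 + u) ^ m)
        ≤ ((1 + u) ^ m - 1) / (x ^ m * (1 + u) ^ m) := by
      gcongr
      linarith
    have e3 : (m : ℝ) * u / (x ^ m * (1 + u) ^ m) = (m : ℝ) * a1 / (1 + u) ^ m := by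
      rw [hu]; field_simp
    have e4 : c ≤ (m : ℝ) * a1 / (1 + u) ^ m := by
      rw [hc]
      have hle : (1 + u) ^ m ≤ D ^ (k - 1) := by
        calc (1 + u) ^ m ≤ D ^ m := by
              apply pow_le_pow_left₀ (by linarith) (by rw [hD]; linarith)
          _ ≤ D ^ (k - 1) := pow_le_pow_right₀ hD1 (by omega)
      gcongr
    rw [e1]
    calc c ≤ (m : ℝ) * a1 / (1 + u) ^ m := e4
      _ = (m : ℝ) * u / (x ^ m * (1 + u) ^ m) := e3.symm
      _ ≤ _ := e2
  -- telescoped inequality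
  have main : ∀ n : ℕ, (∀ s ≤ n, w s ≤ Δ) → (w n ^ m)⁻¹ + c * n ≤ (a0 ^ m)⁻¹ := by
    intro n
    induction n with
    | zero => intro _; simp [hw0]
    | succ n ih =>
      intro h
      have h' : ∀ s ≤ n, w s ≤ Δ := fun s hs => h s (le_trans hs (Nat.le_succ n))
      have h1 := key (w n) (hw n) (h n (Nat.le_succ n))
      have h2 := ih h'
      rw [hrec n]
      push_cast
      linarith
  have hB := main t hts
  have hA : (0 : ℝ) < (w t ^ m)⁻¹ := inv_pos.mpr (pow_pos (hw t) m)
  -- rewrite the goal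
  have hgoal : a0 ^ (-((k : ℝ) - 2))
      - (((k : ℝ) - 2) / D ^ (k - 1)) * a1 * t = ((a0 ^ m)⁻¹ - c * t) := by
    rw [hkm, hc, Real.rpow_neg ha0.le, Real.rpow_natCast]
    ring
  rw [hgoal, hkm]
  have hBA : (w t ^ m)⁻¹ ≤ (a0 ^ m)⁻¹ - c * t := by linarith
  have hexp : -(1 / (m : ℝ)) ≤ 0 := neg_nonpos.mpr (by positivity)
  have step1 : ((a0 ^ m)⁻¹ - c * t) ^ (-(1 / (m : ℝ)))
      ≤ ((w t ^ m)⁻¹) ^ (-(1 / (m : ℝ))) :=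
    Real.rpow_le_rpow_of_nonpos hA hBA hexp
  have step2 : ((w t ^ m)⁻¹) ^ (-(1 / (m : ℝ))) = w t := by
    have hmne : (m : ℝ) ≠ 0 := by positivity
    rw [← Real.rpow_natCast (w t) m, ← Real.rpow_neg (hw t).le,
      ← Real.rpow_mul (hw t).le]
    rw [show -(m : ℝ) * -(1 / (m : ℝ)) = 1 by field_simp]
    exact Real.rpow_one _
  calc ((a0 ^ m)⁻¹ - c * t) ^ (-(1 / (m : ℝ)))
      ≤ ((w t ^ m)⁻¹) ^ (-(1 / (m : ℝ))) := step1
    _ = w t := step2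
end

section
/- Let k, k' ∈ ℕ, and for each δ ∈ {+1,−1}^k consider He_{k'}((1/√k)·∑_{j=1}^k δ_j x_j). Then E_{δ ~ Unif({±1}^k)}[(∏_{j=1}^k δ_j)·He_{k'}((1/√k)·∑_{j=1}^k δ_j x_j)] = 0 for all x ∈ ℝ^k whenever k' < k, and it is a nonzero constant multiple of ∏_{j=1}^k x_j when k' = k. -/
open Finset Polynomial

/-- Finite-difference step: `P ↦ P.comp (X + C a) - P.comp (X - C a)` drops the
degree and scales the top coefficient by `2 (n+1) a`. -/
lemma diff_comp_step (P : ℝ[X]) (a : ℝ) (n : ℕ) (hP : P.natDegree ≤ n + 1) :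
    (P.comp (X + C a) - P.comp (X - C a)).natDegree ≤ n ∧
      (P.comp (X + C a) - P.comp (X - C a)).coeff n = 2 * (n + 1) * a * P.coeff (n + 1) := by
  have key : ∀ b : ℝ, P.comp (X + C b)
      = ∑ i ∈ Finset.range (n + 2), C (P.coeff i) * (X + C b) ^ i := by
    intro b
    rw [Polynomial.comp]
    exact eval₂_eq_sum_range' C (by omega) (X + C b)
  have hsub : (X - C a : ℝ[X]) = X + C (-a) := by rw [map_neg, sub_eq_add_neg]
  have hcoeff : ∀ m, (P.comp (X + C a) - P.comp (X - C a)).coeff m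
      = ∑ i ∈ Finset.range (n + 2),
          P.coeff i * ((a ^ (i - m) - (-a) ^ (i - m)) * (i.choose m : ℝ)) := by
    intro m
    rw [hsub, coeff_sub, key a, key (-a), finset_sum_coeff, finset_sum_coeff,
      ← Finset.sum_sub_distrib]
    refine Finset.sum_congr rfl fun i _ => ?_
    rw [coeff_C_mul, coeff_C_mul, coeff_X_add_C_pow, coeff_X_add_C_pow]
    ring
  constructor
  · rw [natDegree_le_iff_coeff_eq_zero]
    intro m hm
    rw [hcoeff]
    apply Finset.sum_eq_zero
    intro i hi
    rw [Finset.mem_range] at hi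
    rcases lt_or_ge i m with h | h
    · rw [Nat.choose_eq_zero_of_lt h]
      simp
    · have : i - m = 0 := by omega
      simp [this]
  · rw [hcoeff, Finset.sum_eq_single (n + 1)]
    · have h1 : n + 1 - n = 1 := by omega
      rw [h1, Nat.choose_succ_self_right]
      push_cast
      ring
    · intro i hi hne
      rw [Finset.mem_range] at hi
      rcases lt_trichotomy i n with h | h | h
      · rw [Nat.choose_eq_zero_of_lt h]
        simp
      · subst h
        simp
      · omega
    · intro h
      exact absurd (Finset.self_mem_range_succ _) h

/-- Main combinatorial lemma: sign-averaging against a polynomial of degree ≤ k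
extracts the top coefficient times `2^k k! ∏ x`. -/
lemma sign_avg_poly (k : ℕ) : ∀ (P : ℝ[X]), P.natDegree ≤ k → ∀ x : Fin k → ℝ,
    ∑ s : Fin k → Bool, (∏ j, (if s j then (1 : ℝ) else -1)) *
        P.eval (∑ j, (if s j then (1 : ℝ) else -1) * x j)
      = P.coeff k * 2 ^ k * k.factorial * ∏ j, x j := by
  induction k with
  | zero =>
    intro P _ x
    rw [Finset.univ_unique, Finset.sum_singleton]
    simp [coeff_zero_eq_eval_zero]
  | succ k ih =>
    intro P hP x
    set a := x 0 with ha
    set Q := P.comp (X + C a) - P.comp (X - C a) with hQdef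
    obtain ⟨hQdeg, hQcoeff⟩ := diff_comp_step P a k hP
    have hQeval : ∀ A : ℝ, P.eval (x 0 + A) - P.eval (-x 0 + A) = Q.eval A := by
      intro A
      have h1 : x 0 + A = A + a := by rw [ha]; ring
      have h2 : -x 0 + A = A - a := by rw [ha]; ring
      rw [h1, h2, hQdef]
      simp [eval_comp]
    have hsum : (∑ s : Fin (k + 1) → Bool, (∏ j, (if s j then (1 : ℝ) else -1)) *
          P.eval (∑ j, (if s j then (1 : ℝ) else -1) * x j))
        = ∑ s : Fin k → Bool, (∏ j, (if s j then (1 : ℝ) else -1)) *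
            Q.eval (∑ j, (if s j then (1 : ℝ) else -1) * x j.succ) := by
      rw [← Equiv.sum_comp (Fin.consEquiv (fun _ : Fin (k + 1) => Bool))
        (fun s => (∏ j, (if s j then (1 : ℝ) else -1)) *
          P.eval (∑ j, (if s j then (1 : ℝ) else -1) * x j))]
      rw [Fintype.sum_prod_type]
      rw [Fintype.sum_bool]
      rw [← Finset.sum_add_distrib]
      refine Finset.sum_congr rfl fun s _ => ?_
      simp only [Fin.consEquiv_apply, Fin.prod_univ_succ, Fin.sum_univ_succ,
        Fin.cons_zero, Fin.cons_succ, if_true, if_false, Bool.false_eq_true, one_mul,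
        neg_one_mul]
      rw [← hQeval]
      ring
    rw [hsum, ih Q hQdeg (fun j => x j.succ), hQcoeff]
    rw [Fin.prod_univ_succ, Nat.factorial_succ]
    push_cast
    ring

/-- sign-averaging of Hermite polynomials of balanced sign combinations:
`E_{δ ~ Unif({±1}^k)}[(∏_j δ_j) He_{k'}((1/√k) ∑_j δ_j x_j)]` vanishes identically when
`k' < k`, and equals a nonzero constant multiple of `∏_j x_j` when `k' = k`. -/
theorem stmt_15 (k k' : ℕ) :
    (k' < k → ∀ x : Fin k → ℝ,
        (2 ^ k : ℝ)⁻¹ * ∑ s : Fin k → Bool,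
            (∏ j, (if s j then (1 : ℝ) else -1)) *
              aeval ((Real.sqrt k)⁻¹ * ∑ j, (if s j then (1 : ℝ) else -1) * x j)
                (hermite k')
          = 0)
    ∧ (k' = k → ∃ c : ℝ, c ≠ 0 ∧ ∀ x : Fin k → ℝ,
        (2 ^ k : ℝ)⁻¹ * ∑ s : Fin k → Bool,
            (∏ j, (if s j then (1 : ℝ) else -1)) *
              aeval ((Real.sqrt k)⁻¹ * ∑ j, (if s j then (1 : ℝ) else -1) * x j)
                (hermite k')
          = c * ∏ j, x j) := by
  set a : ℝ := (Real.sqrt k)⁻¹ with haa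
  set P : ℝ[X] := (hermite k').map (Int.castRingHom ℝ) with hPdef
  have haev : ∀ r : ℝ, aeval r (hermite k') = P.eval r := by
    intro r
    rw [hPdef, eval_map, aeval_def]
    rfl
  have hPdeg : P.natDegree ≤ k' := le_trans natDegree_map_le (le_of_eq natDegree_hermite)
  have main : k' ≤ k → ∀ x : Fin k → ℝ,
      (2 ^ k : ℝ)⁻¹ * ∑ s : Fin k → Bool,
          (∏ j, (if s j then (1 : ℝ) else -1)) *
            aeval ((Real.sqrt k)⁻¹ * ∑ j, (if s j then (1 : ℝ) else -1) * x j) (hermite k')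
        = P.coeff k * k.factorial * a ^ k * ∏ j, x j := by
    intro hk x
    have harg : ∀ s : Fin k → Bool,
        (Real.sqrt k)⁻¹ * ∑ j, (if s j then (1 : ℝ) else -1) * x j
          = ∑ j, (if s j then (1 : ℝ) else -1) * (a * x j) := by
      intro s
      rw [← haa, Finset.mul_sum]
      exact Finset.sum_congr rfl fun j _ => by ring
    have := sign_avg_poly k P (le_trans hPdeg hk) (fun j => a * x j)
    simp only [haev, harg]
    rw [this, Finset.prod_mul_distrib, Finset.prod_const, Finset.card_univ, Fintype.card_fin]
    have h2 : (2 : ℝ) ^ k ≠ 0 := by positivity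
    field_simp
  constructor
  · intro hk x
    rw [main (le_of_lt hk) x]
    have : P.coeff k = 0 := coeff_eq_zero_of_natDegree_lt (lt_of_le_of_lt hPdeg hk)
    rw [this]
    ring
  · intro hk
    subst hk
    refine ⟨(k'.factorial : ℝ) * a ^ k', ?_, ?_⟩
    · apply mul_ne_zero
      · exact_mod_cast k'.factorial_ne_zero
      · rcases Nat.eq_zero_or_pos k' with h | h
        · subst h; simp
        · apply pow_ne_zero
          rw [haa]
          have : (0 : ℝ) < Real.sqrt k' := Real.sqrt_pos.mpr (by exact_mod_cast h)
          positivity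
    · intro x
      rw [main le_rfl x]
      have : P.coeff k' = 1 := by
        rw [hPdef, coeff_map, coeff_hermite_self]
        simp
      rw [this]
      ring
end
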